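/- Fix integers n ≥ 1, c ≥ 1 and d ∈ ℤ, and let (b₁, b₂, e) ∈ T(c) be such that c_d·1 − s_d b₁ is invertible. Define b₁' = (c_d·1 − s_d b₁)^{-1}(s_d·1 + c_d b₁) and b₂' = (c_d·1 − s_d b₁)^n b₂. Then: (i) (b₁', b₂', e) ∈ T(c); (ii) c_{−d}·1 − s_{−d} b₁' is invertible and applying the same construction with parameter −d to (b₁', b₂', e) gives back (b₁, b₂, e); (iii) the construction is GL(c, ℂ)-equivariant, i.e. it commutes with the action φ : (b₁, b₂, e) ↦ (φb₁φ^{-1}, φb₂φ^{-1}, eφ^{-1}). -/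

import Mathlib

open Matrix

abbrev Mat (c : ℕ) := Matrix (Fin c) (Fin c) ℂ

noncomputable def cS (c : ℕ) (m : ℤ) : ℂ :=
  ((Real.cos (Real.pi * (m : ℝ) / ((c : ℝ) + 1)) : ℝ) : ℂ)

noncomputable def sS (c : ℕ) (m : ℤ) : ℂ :=
  ((Real.sin (Real.pi * (m : ℝ) / ((c : ℝ) + 1)) : ℝ) : ℂ)

noncomputable def A1M (c : ℕ) (m : ℤ) (A1 A2 : Mat c) : Mat c :=
  cS c m • A1 - sS c m • A2

noncomputable def A2M (c : ℕ) (m : ℤ) (A1 A2 : Mat c) : Mat c :=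
  sS c m • A1 + cS c m • A2

noncomputable def BM (c : ℕ) (m : ℤ) (A1 A2 : Mat c) : Mat c :=
  (A2M c m A1 A2)⁻¹ * A1M c m A1 A2

noncomputable def DM (n c : ℕ) (m : ℤ) (C : Fin n → Mat c) : Mat c :=
  ∑ q : Fin n, (((n - 1).choose q.val : ℂ) * cS c m ^ (n - 1 - q.val) * sS c m ^ q.val) • C q

noncomputable def EM (n c : ℕ) (m : ℤ) (A1 A2 : Mat c) (C : Fin n → Mat c) : Mat c :=
  DM n c m C * A2M c m A1 A2

/-- Condition (P1). -/
def CondP1 (n c : ℕ) (A1 A2 : Mat c) (C : Fin n → Mat c) : Prop :=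
  (∀ h : n = 1, A1 * C ⟨0, by omega⟩ * A2 = A2 * C ⟨0, by omega⟩ * A1) ∧
  ∀ q : ℕ, ∀ hq : q + 1 < n,
    A1 * C ⟨q, by omega⟩ = A2 * C ⟨q + 1, hq⟩ ∧
    C ⟨q, by omega⟩ * A1 = C ⟨q + 1, hq⟩ * A2

/-- Condition (P2). -/
def CondP2 (c : ℕ) (A1 A2 : Mat c) : Prop :=
  ∃ ν : ℂ × ℂ, ν ≠ 0 ∧ (ν.1 • A1 + ν.2 • A2).det ≠ 0

/-- Condition (P3), with `C1`, `Cn` the first and last of the `C` matrices. -/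
def CondP3 (n c : ℕ) (A1 A2 C1 Cn : Mat c) (e : Fin c → ℂ) : Prop :=
  ∀ l1 l2 m1 m2 : ℂ, (l1, l2) ≠ 0 → l1 ^ n * m1 + l2 ^ n * m2 = 0 →
    ∀ v : Fin c → ℂ,
      (l2 • A1 + l1 • A2).mulVec v = 0 →
      (C1 * A2 + m1 • 1).mulVec v = 0 →
      (Cn * A1 + ((-1 : ℂ) ^ (n - 1) * m2) • 1).mulVec v = 0 →
      e ⬝ᵥ v = 0 → v = 0

/-- Membership in `P^n(c)`: conditions (P1), (P2), (P3). -/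
def CondP (n c : ℕ) (hn : 0 < n) (A1 A2 : Mat c) (C : Fin n → Mat c) (e : Fin c → ℂ) : Prop :=
  CondP1 n c A1 A2 C ∧ CondP2 c A1 A2 ∧
    CondP3 n c A1 A2 (C ⟨0, hn⟩) (C ⟨n - 1, by omega⟩) e

/-- Condition (T2). -/
def CondT2 (c : ℕ) (b1 b2 : Mat c) (e : Fin c → ℂ) : Prop :=
  ∀ z w : ℂ, ∀ v : Fin c → ℂ,
    (b1 + z • 1).mulVec v = 0 → (b2 + w • 1).mulVec v = 0 → e ⬝ᵥ v = 0 → v = 0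

/-- ADHM data: conditions (T1) and (T2). -/
def ADHM (c : ℕ) (b1 b2 : Mat c) (e : Fin c → ℂ) : Prop :=
  b1 * b2 = b2 * b1 ∧ CondT2 c b1 b2 e

/-!
Write `p = c_d`, `q = s_d`, `M = p - q b₁`, `N = q + p b₁`, so that `b₁' = M⁻¹ N`. Since
`p² + q² = 1`, the rotation identities `p M + q N = 1` and `-q M + p N = b₁` hold; multiplied by
`M⁻¹` they say `p + q b₁' = M⁻¹` and `-q + p b₁' = M⁻¹ b₁`, which is the inversion (ii).
For (T2), if `(b₁' + z) v = 0` then `N v = -z M v`, and the same identities give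
`(p - q z) M v = v` and `b₁ v = -(q + p z) M v`. So `v` is a common eigenvector of `M` and `b₁`,
and the condition for `(b₁, b₂, e)` applies at `z' = (q + p z)/(p - q z)`, `w' = w (p - q z)ⁿ`.
Equivariance holds because `b₁'`, `b₂'` are built from `b₁`, `b₂` by ring operations and inversion.
-/

lemma cS_neg (c : ℕ) (d : ℤ) : cS c (-d) = cS c d := by
  simp [cS, neg_div]

lemma sS_neg (c : ℕ) (d : ℤ) : sS c (-d) = -sS c d := by
  simp [sS, neg_div]

lemma cS_sq_add_sS_sq (c : ℕ) (d : ℤ) : cS c d ^ 2 + sS c d ^ 2 = 1 := by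
  simp only [cS, sS]
  exact_mod_cast Real.cos_sq_add_sin_sq _

section CommRing

variable {ι R : Type*} [DecidableEq ι] [CommRing R]

def mobiusDen (p q : R) (b : Matrix ι ι R) : Matrix ι ι R := p • 1 - q • b

def mobiusNum (p q : R) (b : Matrix ι ι R) : Matrix ι ι R := q • 1 + p • b

variable {p q : R} {b x : Matrix ι ι R}

lemma smul_mobiusDen_add_smul_mobiusNum (hpq : p ^ 2 + q ^ 2 = 1) :
    p • mobiusDen p q b + q • mobiusNum p q b = 1 :=
  calc p • mobiusDen p q b + q • mobiusNum p q b = (p ^ 2 + q ^ 2) • (1 : Matrix ι ι R) := by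
        simp only [mobiusDen, mobiusNum]; module
    _ = 1 := by rw [hpq, one_smul]

lemma neg_smul_mobiusDen_add_smul_mobiusNum (hpq : p ^ 2 + q ^ 2 = 1) :
    (-q) • mobiusDen p q b + p • mobiusNum p q b = b :=
  calc (-q) • mobiusDen p q b + p • mobiusNum p q b = (p ^ 2 + q ^ 2) • b := by
        simp only [mobiusDen, mobiusNum]; module
    _ = b := by rw [hpq, one_smul]

variable [Fintype ι]

/-- For `p = cos θ`, `q = sin θ` this is the matrix version of `tan α ↦ tan (α + θ)`. -/
noncomputable def mobius (p q : R) (b : Matrix ι ι R) : Matrix ι ι R :=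
  (mobiusDen p q b)⁻¹ * mobiusNum p q b

lemma Commute.mobiusDen_left (h : Commute b x) : Commute (mobiusDen p q b) x :=
  ((Commute.one_left x).smul_left p).sub_left (h.smul_left q)

lemma Commute.mobiusNum_left (h : Commute b x) : Commute (mobiusNum p q b) x :=
  ((Commute.one_left x).smul_left q).add_left (h.smul_left p)

lemma Commute.mobius_left (h : Commute b x) : Commute (mobius p q b) x := by
  have hinv : Commute (mobiusDen p q b)⁻¹ x := by
    simpa using Matrix.Commute.zpow_left h.mobiusDen_left (-1)
  exact hinv.mul_left h.mobiusNum_left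

lemma commute_mobius_mobiusDen_pow_mul {b₂ : Matrix ι ι R} (h : Commute b b₂) (n : ℕ) :
    Commute (mobius p q b) (mobiusDen p q b ^ n * b₂) :=
  (((Commute.refl b).mobiusDen_left.pow_left n).symm.mul_right h).mobius_left

lemma mobiusDen_neg_mobius (hpq : p ^ 2 + q ^ 2 = 1) (hM : IsUnit (mobiusDen p q b)) :
    mobiusDen p (-q) (mobius p q b) = (mobiusDen p q b)⁻¹ := by
  have hdet := (isUnit_iff_isUnit_det _).mp hM
  calc mobiusDen p (-q) (mobius p q b)
      = (mobiusDen p q b)⁻¹ * (p • mobiusDen p q b + q • mobiusNum p q b) := by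
        rw [mobiusDen, mobius, mul_add, Matrix.mul_smul, Matrix.mul_smul, nonsing_inv_mul _ hdet,
          neg_smul, sub_neg_eq_add]
    _ = (mobiusDen p q b)⁻¹ := by rw [smul_mobiusDen_add_smul_mobiusNum hpq, mul_one]

lemma mobiusNum_neg_mobius (hpq : p ^ 2 + q ^ 2 = 1) (hM : IsUnit (mobiusDen p q b)) :
    mobiusNum p (-q) (mobius p q b) = (mobiusDen p q b)⁻¹ * b := by
  have hdet := (isUnit_iff_isUnit_det _).mp hM
  calc mobiusNum p (-q) (mobius p q b)
      = (mobiusDen p q b)⁻¹ * ((-q) • mobiusDen p q b + p • mobiusNum p q b) := by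
        rw [mobiusNum, mobius, mul_add, Matrix.mul_smul, Matrix.mul_smul, nonsing_inv_mul _ hdet]
    _ = (mobiusDen p q b)⁻¹ * b := by rw [neg_smul_mobiusDen_add_smul_mobiusNum hpq]

lemma isUnit_mobiusDen_neg_mobius (hpq : p ^ 2 + q ^ 2 = 1) (hM : IsUnit (mobiusDen p q b)) :
    IsUnit (mobiusDen p (-q) (mobius p q b)) := by
  rwa [mobiusDen_neg_mobius hpq hM, isUnit_nonsing_inv_iff]

lemma mobius_neg_mobius (hpq : p ^ 2 + q ^ 2 = 1) (hM : IsUnit (mobiusDen p q b)) :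
    mobius p (-q) (mobius p q b) = b := by
  have hdet := (isUnit_iff_isUnit_det _).mp hM
  rw [mobius, mobiusDen_neg_mobius hpq hM, mobiusNum_neg_mobius hpq hM,
    nonsing_inv_nonsing_inv _ hdet, mul_nonsing_inv_cancel_left _ _ hdet]

lemma mobiusDen_neg_mobius_pow_mul (hpq : p ^ 2 + q ^ 2 = 1) (hM : IsUnit (mobiusDen p q b))
    (n : ℕ) (b₂ : Matrix ι ι R) :
    mobiusDen p (-q) (mobius p q b) ^ n * (mobiusDen p q b ^ n * b₂) = b₂ := by
  have hdet := (isUnit_iff_isUnit_det _).mp hM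
  have hcomm : Commute (mobiusDen p q b)⁻¹ (mobiusDen p q b) :=
    (nonsing_inv_mul _ hdet).trans (mul_nonsing_inv _ hdet).symm
  rw [mobiusDen_neg_mobius hpq hM, ← mul_assoc, ← hcomm.mul_pow, nonsing_inv_mul _ hdet, one_pow,
    one_mul]

lemma mobiusDen_conj {φ : Matrix ι ι R} (hφ : IsUnit φ) :
    mobiusDen p q (φ * b * φ⁻¹) = φ * mobiusDen p q b * φ⁻¹ := by
  have hdet := (isUnit_iff_isUnit_det _).mp hφ
  simp only [mobiusDen, mul_sub, sub_mul, Matrix.mul_smul, Matrix.smul_mul, mul_one,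
    mul_nonsing_inv _ hdet]

lemma mobiusNum_conj {φ : Matrix ι ι R} (hφ : IsUnit φ) :
    mobiusNum p q (φ * b * φ⁻¹) = φ * mobiusNum p q b * φ⁻¹ := by
  have hdet := (isUnit_iff_isUnit_det _).mp hφ
  simp only [mobiusNum, mul_add, add_mul, Matrix.mul_smul, Matrix.smul_mul, mul_one,
    mul_nonsing_inv _ hdet]

lemma mobius_conj {φ : Matrix ι ι R} (hφ : IsUnit φ) :
    mobius p q (φ * b * φ⁻¹) = φ * mobius p q b * φ⁻¹ := by
  have hdet := (isUnit_iff_isUnit_det _).mp hφ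
  rw [mobius, mobiusDen_conj hφ, mobiusNum_conj hφ, Matrix.mul_inv_rev, Matrix.mul_inv_rev,
    nonsing_inv_nonsing_inv _ hdet, mobius]
  simp only [mul_assoc, nonsing_inv_mul_cancel_left _ _ hdet]

lemma mobiusDen_conj_pow_mul {φ : Matrix ι ι R} (hφ : IsUnit φ) (n : ℕ) (b₂ : Matrix ι ι R) :
    mobiusDen p q (φ * b * φ⁻¹) ^ n * (φ * b₂ * φ⁻¹) = φ * (mobiusDen p q b ^ n * b₂) * φ⁻¹ := by
  have hdet := (isUnit_iff_isUnit_det _).mp hφ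
  have hpow := Units.conj_pow hφ.unit (mobiusDen p q b) n
  rw [Matrix.coe_units_inv, IsUnit.unit_spec] at hpow
  rw [mobiusDen_conj hφ, hpow]
  simp only [mul_assoc, nonsing_inv_mul_cancel_left _ _ hdet]

end CommRing

section Field

variable {ι K : Type*} [Fintype ι] [DecidableEq ι] [Field K] {p q : K} {b : Matrix ι ι K}

lemma Matrix.pow_mulVec_of_mulVec_eq_smul {A : Matrix ι ι K} {v : ι → K} {a : K}
    (h : A *ᵥ v = a • v) (k : ℕ) : (A ^ k) *ᵥ v = a ^ k • v := by
  induction k with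
  | zero => simp
  | succ k ih => rw [pow_succ, ← mulVec_mulVec, h, mulVec_smul, ih, smul_smul, ← pow_succ']

lemma mobiusDen_mulVec_of_mobius_add_smul_mulVec_eq_zero (hpq : p ^ 2 + q ^ 2 = 1)
    (hM : IsUnit (mobiusDen p q b)) {z : K} {v : ι → K} (hv : (mobius p q b + z • 1) *ᵥ v = 0) :
    (p - q * z) • (mobiusDen p q b *ᵥ v) = v ∧
      b *ᵥ v = (-(q + p * z)) • (mobiusDen p q b *ᵥ v) := by
  have hdet := (isUnit_iff_isUnit_det _).mp hM
  have hN : mobiusNum p q b *ᵥ v = (-z) • (mobiusDen p q b *ᵥ v) := by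
    have h := congrArg (mobiusDen p q b *ᵥ ·) hv
    simp only [mobius, add_mulVec, smul_mulVec, one_mulVec, mulVec_add, mulVec_smul,
      mulVec_mulVec, mul_nonsing_inv_cancel_left _ _ hdet, mulVec_zero] at h
    rw [neg_smul, eq_neg_iff_add_eq_zero, h]
  constructor
  · calc (p - q * z) • (mobiusDen p q b *ᵥ v)
        = (p • mobiusDen p q b + q • mobiusNum p q b) *ᵥ v := by
          rw [add_mulVec, smul_mulVec, smul_mulVec, hN]; module
      _ = v := by rw [smul_mobiusDen_add_smul_mobiusNum hpq, one_mulVec]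
  · calc b *ᵥ v = ((-q) • mobiusDen p q b + p • mobiusNum p q b) *ᵥ v := by
          rw [neg_smul_mobiusDen_add_smul_mobiusNum hpq]
      _ = (-(q + p * z)) • (mobiusDen p q b *ᵥ v) := by
          rw [add_mulVec, smul_mulVec, smul_mulVec, hN]; module

end Field

lemma condT2_mobius {c n : ℕ} {p q : ℂ} {b1 b2 : Mat c} {e : Fin c → ℂ}
    (hpq : p ^ 2 + q ^ 2 = 1) (hM : IsUnit (mobiusDen p q b1)) (h12 : Commute b1 b2)
    (hT2 : CondT2 c b1 b2 e) :
    CondT2 c (mobius p q b1) (mobiusDen p q b1 ^ n * b2) e := by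
  intro z w v hv1 hv2 hve
  obtain ⟨hMv, hbv⟩ := mobiusDen_mulVec_of_mobius_add_smul_mulVec_eq_zero hpq hM hv1
  set t := p - q * z
  by_cases ht : t = 0
  · rwa [ht, zero_smul, eq_comm] at hMv
  have hMv' : mobiusDen p q b1 *ᵥ v = t⁻¹ • v := by
    rw [eq_inv_smul_iff₀ ht, hMv]
  refine hT2 ((q + p * z) / t) (w * t ^ n) v ?_ ?_ hve
  · rw [add_mulVec, hbv, hMv', smul_mulVec, one_mulVec, smul_smul, ← add_smul]
    convert zero_smul ℂ v using 2
    ring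
  · have hv2' : (t⁻¹ ^ n) • (b2 *ᵥ v) + w • v = 0 := by
      rwa [(h12.mobiusDen_left.pow_left n).eq, add_mulVec, ← mulVec_mulVec,
        pow_mulVec_of_mulVec_eq_smul hMv', mulVec_smul, smul_mulVec, one_mulVec] at hv2
    calc (b2 + (w * t ^ n) • 1) *ᵥ v = t ^ n • ((t⁻¹ ^ n) • (b2 *ᵥ v) + w • v) := by
          rw [add_mulVec, smul_mulVec, one_mulVec, smul_add, smul_smul, ← mul_pow,
            mul_inv_cancel₀ ht, one_pow, one_smul, smul_smul, mul_comm]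
      _ = 0 := by rw [hv2', smul_zero]

theorem stmt12_general (n c : ℕ) (d : ℤ)
    (b1 b2 : Mat c) (e : Fin c → ℂ) (hT : ADHM c b1 b2 e)
    (hinv : IsUnit (cS c d • (1 : Mat c) - sS c d • b1)) :
    -- (i)
    ADHM c ((cS c d • (1 : Mat c) - sS c d • b1)⁻¹ * (sS c d • (1 : Mat c) + cS c d • b1))
      ((cS c d • (1 : Mat c) - sS c d • b1) ^ n * b2) e ∧
    -- (ii)
    (IsUnit (cS c (-d) • (1 : Mat c) -
        sS c (-d) • ((cS c d • (1 : Mat c) - sS c d • b1)⁻¹ *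
          (sS c d • (1 : Mat c) + cS c d • b1))) ∧
      (cS c (-d) • (1 : Mat c) -
          sS c (-d) • ((cS c d • (1 : Mat c) - sS c d • b1)⁻¹ *
            (sS c d • (1 : Mat c) + cS c d • b1)))⁻¹ *
        (sS c (-d) • (1 : Mat c) +
          cS c (-d) • ((cS c d • (1 : Mat c) - sS c d • b1)⁻¹ *
            (sS c d • (1 : Mat c) + cS c d • b1))) = b1 ∧
      (cS c (-d) • (1 : Mat c) -
          sS c (-d) • ((cS c d • (1 : Mat c) - sS c d • b1)⁻¹ *
            (sS c d • (1 : Mat c) + cS c d • b1))) ^ n *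
        ((cS c d • (1 : Mat c) - sS c d • b1) ^ n * b2) = b2) ∧
    -- (iii)
    (∀ φ : Mat c, IsUnit φ →
      (cS c d • (1 : Mat c) - sS c d • (φ * b1 * φ⁻¹))⁻¹ *
          (sS c d • (1 : Mat c) + cS c d • (φ * b1 * φ⁻¹)) =
        φ * ((cS c d • (1 : Mat c) - sS c d • b1)⁻¹ *
          (sS c d • (1 : Mat c) + cS c d • b1)) * φ⁻¹ ∧
      (cS c d • (1 : Mat c) - sS c d • (φ * b1 * φ⁻¹)) ^ n * (φ * b2 * φ⁻¹) =
        φ * ((cS c d • (1 : Mat c) - sS c d • b1) ^ n * b2) * φ⁻¹) := by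
  obtain ⟨h12, hT2⟩ := hT
  have hpq := cS_sq_add_sS_sq c d
  rw [cS_neg, sS_neg]
  exact ⟨⟨commute_mobius_mobiusDen_pow_mul h12 n, condT2_mobius hpq hinv h12 hT2⟩,
    ⟨isUnit_mobiusDen_neg_mobius hpq hinv, mobius_neg_mobius hpq hinv,
      mobiusDen_neg_mobius_pow_mul hpq hinv n b2⟩,
    fun φ hφ => ⟨mobius_conj hφ, mobiusDen_conj_pow_mul hφ n b2⟩⟩

/-- the transition map (b₁, b₂, e) ↦ (b₁', b₂', e) with
b₁' = (c_d·1 − s_d b₁)⁻¹(s_d·1 + c_d b₁), b₂' = (c_d·1 − s_d b₁)^n b₂: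
(i) preserves ADHM data; (ii) is inverted by the same construction with parameter −d;
(iii) is GL(c,ℂ)-equivariant. -/
theorem stmt12 (n c : ℕ) (hn : 0 < n) (hc : 0 < c) (d : ℤ)
    (b1 b2 : Mat c) (e : Fin c → ℂ) (hT : ADHM c b1 b2 e)
    (hinv : IsUnit (cS c d • (1 : Mat c) - sS c d • b1)) :
    -- (i)
    ADHM c ((cS c d • (1 : Mat c) - sS c d • b1)⁻¹ * (sS c d • (1 : Mat c) + cS c d • b1))
      ((cS c d • (1 : Mat c) - sS c d • b1) ^ n * b2) e ∧
    -- (ii)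
    (IsUnit (cS c (-d) • (1 : Mat c) -
        sS c (-d) • ((cS c d • (1 : Mat c) - sS c d • b1)⁻¹ *
          (sS c d • (1 : Mat c) + cS c d • b1))) ∧
      (cS c (-d) • (1 : Mat c) -
          sS c (-d) • ((cS c d • (1 : Mat c) - sS c d • b1)⁻¹ *
            (sS c d • (1 : Mat c) + cS c d • b1)))⁻¹ *
        (sS c (-d) • (1 : Mat c) +
          cS c (-d) • ((cS c d • (1 : Mat c) - sS c d • b1)⁻¹ *
            (sS c d • (1 : Mat c) + cS c d • b1))) = b1 ∧
      (cS c (-d) • (1 : Mat c) -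
          sS c (-d) • ((cS c d • (1 : Mat c) - sS c d • b1)⁻¹ *
            (sS c d • (1 : Mat c) + cS c d • b1))) ^ n *
        ((cS c d • (1 : Mat c) - sS c d • b1) ^ n * b2) = b2) ∧
    -- (iii)
    (∀ φ : Mat c, IsUnit φ →
      (cS c d • (1 : Mat c) - sS c d • (φ * b1 * φ⁻¹))⁻¹ *
          (sS c d • (1 : Mat c) + cS c d • (φ * b1 * φ⁻¹)) =
        φ * ((cS c d • (1 : Mat c) - sS c d • b1)⁻¹ *
          (sS c d • (1 : Mat c) + cS c d • b1)) * φ⁻¹ ∧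
      (cS c d • (1 : Mat c) - sS c d • (φ * b1 * φ⁻¹)) ^ n * (φ * b2 * φ⁻¹) =
        φ * ((cS c d • (1 : Mat c) - sS c d • b1) ^ n * b2) * φ⁻¹) :=
  stmt12_general n c d b1 b2 e hT hinv
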